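/- arXiv:1509.05928 — 2 statements merged into one kernel-verified Lean document; each statement's English description precedes it below -/
import Mathlib

section
/- Let n ≥ 1, σ > 0, and let g : ℝⁿ → ℂ be measurable. Then [g ∈ L²(ℝⁿ) and g satisfies the weak A-condition with exponent 2σ] if and only if there exist constants c, c′ > 0 such that for all t ≥ 0: c (1+t)^{−2σ} ≤ ∫_{ℝⁿ} e^{−2t|ξ|²} |g(ξ)|² dξ ≤ c′ (1+t)^{−2σ}. By Plancherel the integral equals ‖e^{tΔ}u₀‖_{L²}² for u₀ with Fourier transform g, so this characterizes L²(ℝⁿ) ∩ 𝒜^{−2σ}_{2,∞} by the two-sided heat decay c″(1+t)^{−σ} ≤ ‖e^{tΔ}u₀‖₂ ≤ c‴(1+t)^{−σ}. -/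
open MeasureTheory Filter Topology
open scoped ENNReal NNReal

noncomputable section

/-- The quantity `ρ^{-(2r+n)} ∫_{|ξ|≤ρ} |g(ξ)|² dξ`, valued in `[0,∞]`. -/
def decayFun (n : ℕ) (g : EuclideanSpace ℝ (Fin n) → ℂ) (r ρ : ℝ) : ℝ≥0∞ :=
  ENNReal.ofReal (ρ ^ (-(2 * r + (n : ℝ)))) *
    ∫⁻ ξ in {ξ : EuclideanSpace ℝ (Fin n) | ‖ξ‖ ≤ ρ}, ENNReal.ofReal (‖g ξ‖ ^ 2)

/-- Lower decay indicator `P_r(g)₋`. -/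
def Pminus (n : ℕ) (g : EuclideanSpace ℝ (Fin n) → ℂ) (r : ℝ) : ℝ≥0∞ :=
  liminf (fun ρ : ℝ => decayFun n g r ρ) (𝓝[>] (0 : ℝ))

/-- Upper decay indicator `P_r(g)₊`. -/
def Pplus (n : ℕ) (g : EuclideanSpace ℝ (Fin n) → ℂ) (r : ℝ) : ℝ≥0∞ :=
  limsup (fun ρ : ℝ => decayFun n g r ρ) (𝓝[>] (0 : ℝ))

/-- `E_α(t) = ∫_{ℝⁿ} e^{−2t|ξ|^{2α}} |g(ξ)|² dξ`, valued in `[0,∞]`. -/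
def Ealpha (n : ℕ) (g : EuclideanSpace ℝ (Fin n) → ℂ) (α t : ℝ) : ℝ≥0∞ :=
  ∫⁻ ξ : EuclideanSpace ℝ (Fin n),
    ENNReal.ofReal (Real.exp (-(2 * t) * ‖ξ‖ ^ (2 * α)) * ‖g ξ‖ ^ 2)

/-- Sharp Littlewood–Paley block: `a_j(g) = (∫_{2^j ≤ |ξ| < 2^{j+1}} |g(ξ)|² dξ)^{1/2}`. -/
def ajBlock (n : ℕ) (g : EuclideanSpace ℝ (Fin n) → ℂ) (j : ℤ) : ℝ≥0∞ :=
  (∫⁻ ξ in {ξ : EuclideanSpace ℝ (Fin n) |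
      (2 : ℝ) ^ (j : ℝ) ≤ ‖ξ‖ ∧ ‖ξ‖ < (2 : ℝ) ^ ((j : ℝ) + 1)},
    ENNReal.ofReal (‖g ξ‖ ^ 2)) ^ (1 / 2 : ℝ)

/-- The strong A-condition with exponent `σ`: the Fourier-side description of `Ȧ^{-σ}_{2,∞}`. -/
def StrongACond (n : ℕ) (g : EuclideanSpace ℝ (Fin n) → ℂ) (σ : ℝ) : Prop :=
  ∃ c C : ℝ, 0 < c ∧ 0 < C ∧ ∃ M : ℕ, 0 < M ∧
    (∀ j : ℤ, ajBlock n g j ≤ ENNReal.ofReal (C * (2 : ℝ) ^ (σ * (j : ℝ)))) ∧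
    (∀ j₀ : ℤ, ∃ j : ℤ, j₀ ≤ j ∧ j < j₀ + M ∧
      ENNReal.ofReal (c * (2 : ℝ) ^ (σ * (j : ℝ))) ≤ ajBlock n g j)

/-- The weak A-condition with exponent `σ`: the Fourier-side description of `𝒜^{-σ}_{2,∞}`. -/
def WeakACond (n : ℕ) (g : EuclideanSpace ℝ (Fin n) → ℂ) (σ : ℝ) : Prop :=
  ∃ c C : ℝ, 0 < c ∧ 0 < C ∧ ∃ jk : ℕ → ℤ,
    Filter.Tendsto jk Filter.atTop Filter.atBot ∧
    (∃ M : ℕ, ∀ k : ℕ, |jk k - jk (k + 1)| ≤ M) ∧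
    (∀ j : ℤ, ajBlock n g j ≤ ENNReal.ofReal (C * (2 : ℝ) ^ (σ * (j : ℝ)))) ∧
    (∀ k : ℕ, ENNReal.ofReal (c * (2 : ℝ) ^ (σ * (jk k : ℝ))) ≤ ajBlock n g (jk k))

/-!
Cut frequency space into the dyadic shells `2^j ≤ |ξ| < 2^{j+1}` with energies `b_j`. On the
`j`-th shell the heat factor `e^{-2t|ξ|²}` lies between `e^{-8t4^j}` and `e^{-2t4^j}`, so `E(t)` is
squeezed between single terms `e^{-8t4^j} b_j` and the sum `∑_j e^{-2t4^j} b_j`. At the times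
`t = 4^k`, substituting `j = m - k` turns a bound `b_j ≤ B 4^{pj}` (here `p = 2σ`) into
`E(4^k) ≤ B 4^{-pk} ∑_m e^{-2·4^m} 4^{pm}`, a convergent sum; testing at `t = 4^{-j}` gives back
`b_j ≤ e^8 E(4^{-j})`. A large shell within bounded distance of `-k` keeps `E(4^k) ≳ 4^{-pk}`.
Conversely, if all shells in a wide window around `-k` were small, the tails of the convergent sum
would push `E(4^k)` below the lower bound. `E` is antitone, so bounds at the times `4^k` extend to
all `t ≥ 0`.
-/

def shell (n : ℕ) (j : ℤ) : Set (EuclideanSpace ℝ (Fin n)) :=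
  (‖·‖) ⁻¹' Set.Ico ((2 : ℝ) ^ j) (2 ^ (j + 1))

def shellEnergy (n : ℕ) (g : EuclideanSpace ℝ (Fin n) → ℂ) (j : ℤ) : ℝ≥0∞ :=
  ∫⁻ ξ in shell n j, ENNReal.ofReal (‖g ξ‖ ^ 2)

section Shells

variable {n : ℕ}

lemma measurableSet_shell (j : ℤ) : MeasurableSet (shell n j) :=
  measurable_norm measurableSet_Ico

lemma pairwise_disjoint_shell : Pairwise (Function.onFun Disjoint (shell n)) := by
  intro i j hij
  wlog h : i < j generalizing i j
  · exact (this hij.symm (by omega)).symm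
  refine Set.disjoint_left.2 fun ξ hi hj => ?_
  have : (2 : ℝ) ^ (i + 1) ≤ 2 ^ j := zpow_le_zpow_right₀ one_le_two (by omega)
  exact (hi.2.trans_le this).not_ge hj.1

lemma iUnion_shell : ⋃ j, shell n j = {0}ᶜ := by
  ext ξ
  simp only [Set.mem_iUnion, Set.mem_compl_iff, Set.mem_singleton_iff]
  constructor
  · rintro ⟨j, hj, -⟩ rfl
    exact (zpow_pos two_pos j).not_ge (by simpa using hj)
  · exact fun hξ => exists_mem_Ico_zpow (norm_pos_iff.2 hξ) one_lt_two

lemma lintegral_eq_tsum_shell (hn : 1 ≤ n) (f : EuclideanSpace ℝ (Fin n) → ℝ≥0∞) :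
    ∫⁻ ξ, f ξ = ∑' j, ∫⁻ ξ in shell n j, f ξ := by
  have : Nonempty (Fin n) := Fin.pos_iff_nonempty.mp hn
  rw [← lintegral_iUnion measurableSet_shell pairwise_disjoint_shell, iUnion_shell,
    restrict_compl_singleton]

lemma norm_sq_mem_Icc_of_mem_shell {j : ℤ} {ξ : EuclideanSpace ℝ (Fin n)} (hξ : ξ ∈ shell n j) :
    ‖ξ‖ ^ 2 ∈ Set.Icc ((4 : ℝ) ^ j) (4 * 4 ^ j) := by
  have h4 : ∀ i : ℤ, (4 : ℝ) ^ i = ((2 : ℝ) ^ i) ^ 2 := fun i => by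
    rw [← zpow_natCast, ← zpow_mul, mul_comm, zpow_mul]; norm_num
  obtain ⟨h1, h2⟩ := hξ
  refine ⟨h4 j ▸ pow_le_pow_left₀ (zpow_pos two_pos j).le h1 2, ?_⟩
  rw [show (4 : ℝ) * 4 ^ j = 4 ^ (j + 1) by rw [zpow_add_one₀ (by norm_num), mul_comm], h4]
  exact pow_le_pow_left₀ (norm_nonneg ξ) h2.le 2

end Shells

section WeakA

variable {n : ℕ} {g : EuclideanSpace ℝ (Fin n) → ℂ}

lemma ajBlock_eq_shellEnergy_rpow (j : ℤ) : ajBlock n g j = shellEnergy n g j ^ (1 / 2 : ℝ) := by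
  have h : (2 : ℝ) ^ ((j : ℝ) + 1) = 2 ^ (j + 1) := by
    rw [← Real.rpow_intCast]; push_cast; rfl
  simp only [ajBlock, shellEnergy, shell, Real.rpow_intCast, h]
  rfl

lemma ajBlock_le_ofReal_iff {j : ℤ} {x : ℝ} (hx : 0 ≤ x) :
    ajBlock n g j ≤ ENNReal.ofReal x ↔ shellEnergy n g j ≤ ENNReal.ofReal (x ^ 2) := by
  rw [ajBlock_eq_shellEnergy_rpow, ENNReal.ofReal_pow hx,
    ← ENNReal.rpow_le_rpow_iff (z := 2) two_pos, ← ENNReal.rpow_mul]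
  norm_num

lemma ofReal_le_ajBlock_iff {j : ℤ} {x : ℝ} (hx : 0 ≤ x) :
    ENNReal.ofReal x ≤ ajBlock n g j ↔ ENNReal.ofReal (x ^ 2) ≤ shellEnergy n g j := by
  rw [ajBlock_eq_shellEnergy_rpow, ENNReal.ofReal_pow hx,
    ← ENNReal.rpow_le_rpow_iff (z := 2) two_pos, ← ENNReal.rpow_mul]
  norm_num

lemma mul_two_rpow_sq (c s : ℝ) (j : ℤ) :
    (c * (2 : ℝ) ^ (s * j)) ^ 2 = c ^ 2 * ((4 : ℝ) ^ j) ^ s := by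
  have h4 : ((4 : ℝ) ^ j) ^ s = (2 : ℝ) ^ (s * j) * 2 ^ (s * j) := by
    rw [← Real.rpow_add two_pos, ← Real.rpow_intCast, ← Real.rpow_mul (by norm_num),
      show (4 : ℝ) = 2 ^ (2 : ℝ) by norm_num, ← Real.rpow_mul zero_le_two]
    ring_nf
  rw [h4]
  ring_nf

lemma weakACond_iff_shellEnergy (s : ℝ) :
    WeakACond n g s ↔ ∃ c C : ℝ, 0 < c ∧ 0 < C ∧ ∃ jk : ℕ → ℤ,
      Tendsto jk atTop atBot ∧ (∃ M : ℕ, ∀ k, |jk k - jk (k + 1)| ≤ M) ∧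
      (∀ j, shellEnergy n g j ≤ ENNReal.ofReal (C * ((4 : ℝ) ^ j) ^ s)) ∧
      ∀ k, ENNReal.ofReal (c * ((4 : ℝ) ^ jk k) ^ s) ≤ shellEnergy n g (jk k) := by
  constructor
  · rintro ⟨c, C, hc, hC, jk, hjk, hgap, hup, hlow⟩
    refine ⟨c ^ 2, C ^ 2, by positivity, by positivity, jk, hjk, hgap, fun j => ?_, fun k => ?_⟩
    · rw [← mul_two_rpow_sq]
      exact (ajBlock_le_ofReal_iff (by positivity)).1 (hup j)
    · rw [← mul_two_rpow_sq]
      exact (ofReal_le_ajBlock_iff (by positivity)).1 (hlow k)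
  · rintro ⟨c, C, hc, hC, jk, hjk, hgap, hup, hlow⟩
    refine ⟨√c, √C, by positivity, by positivity, jk, hjk, hgap, fun j => ?_, fun k => ?_⟩
    · rw [ajBlock_le_ofReal_iff (by positivity), mul_two_rpow_sq, Real.sq_sqrt hC.le]
      exact hup j
    · rw [ofReal_le_ajBlock_iff (by positivity), mul_two_rpow_sq, Real.sq_sqrt hc.le]
      exact hlow k

end WeakA

section HeatEnergy

variable {n : ℕ} {g : EuclideanSpace ℝ (Fin n) → ℂ}

lemma Ealpha_one_eq (t : ℝ) :
    Ealpha n g 1 t = ∫⁻ ξ, ENNReal.ofReal (Real.exp (-(2 * t) * ‖ξ‖ ^ 2) * ‖g ξ‖ ^ 2) := by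
  simp only [Ealpha, mul_one, Real.rpow_two]

lemma antitone_Ealpha_one : Antitone (Ealpha n g 1) := by
  intro t s hts
  simp only [Ealpha_one_eq]
  gcongr

lemma Ealpha_one_zero : Ealpha n g 1 0 = ∫⁻ ξ, ENNReal.ofReal (‖g ξ‖ ^ 2) := by
  simp [Ealpha_one_eq]

lemma memLp_two_iff_Ealpha_one_zero_lt_top (hg : AEStronglyMeasurable g volume) :
    MemLp g 2 volume ↔ Ealpha n g 1 0 < ∞ := by
  rw [memLp_two_iff_integrable_sq_norm hg, Ealpha_one_zero, Integrable,
    hasFiniteIntegral_iff_ofReal (ae_of_all _ fun ξ => by positivity)]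
  exact and_iff_right (hg.norm.pow 2)

lemma setLIntegral_shell_le {t : ℝ} (ht : 0 ≤ t) (j : ℤ) :
    ∫⁻ ξ in shell n j, ENNReal.ofReal (Real.exp (-(2 * t) * ‖ξ‖ ^ 2) * ‖g ξ‖ ^ 2)
      ≤ ENNReal.ofReal (Real.exp (-(2 * t) * 4 ^ j)) * shellEnergy n g j := by
  rw [shellEnergy, ← lintegral_const_mul' _ _ ENNReal.ofReal_ne_top]
  refine setLIntegral_mono' (measurableSet_shell j) fun ξ hξ => ?_
  rw [← ENNReal.ofReal_mul (Real.exp_nonneg _)]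
  refine ENNReal.ofReal_le_ofReal
    (mul_le_mul_of_nonneg_right (Real.exp_le_exp.2 ?_) (by positivity))
  nlinarith [(norm_sq_mem_Icc_of_mem_shell hξ).1]

lemma ofReal_exp_mul_shellEnergy_le_Ealpha_one {t : ℝ} (ht : 0 ≤ t) (j : ℤ) :
    ENNReal.ofReal (Real.exp (-(8 * t) * 4 ^ j)) * shellEnergy n g j ≤ Ealpha n g 1 t := by
  rw [shellEnergy, ← lintegral_const_mul' _ _ ENNReal.ofReal_ne_top, Ealpha_one_eq]
  refine (setLIntegral_mono' (measurableSet_shell j) fun ξ hξ => ?_).trans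
    (setLIntegral_le_lintegral _ _)
  rw [← ENNReal.ofReal_mul (Real.exp_nonneg _)]
  refine ENNReal.ofReal_le_ofReal
    (mul_le_mul_of_nonneg_right (Real.exp_le_exp.2 ?_) (by positivity))
  nlinarith [(norm_sq_mem_Icc_of_mem_shell hξ).2]

lemma Ealpha_one_le_tsum (hn : 1 ≤ n) {t : ℝ} (ht : 0 ≤ t) :
    Ealpha n g 1 t ≤ ∑' j, ENNReal.ofReal (Real.exp (-(2 * t) * 4 ^ j)) * shellEnergy n g j := by
  rw [Ealpha_one_eq, lintegral_eq_tsum_shell hn]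
  exact ENNReal.tsum_le_tsum fun j => setLIntegral_shell_le ht j

end HeatEnergy

lemma Real.rpow_le_rpow_mul_exp {x p : ℝ} (hx : 0 ≤ x) (hp : 0 < p) :
    x ^ p ≤ p ^ p * Real.exp x := by
  have hxp : x / p ≤ Real.exp (x / p) := by linarith [Real.add_one_le_exp (x / p)]
  calc x ^ p = p ^ p * (x / p) ^ p := by
        rw [← Real.mul_rpow hp.le (by positivity), mul_div_cancel₀ _ hp.ne']
    _ ≤ p ^ p * Real.exp (x / p) ^ p := by gcongr
    _ = p ^ p * Real.exp x := by rw [← Real.exp_mul, div_mul_cancel₀ _ hp.ne']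

def heatWeight (p : ℝ) (m : ℤ) : ℝ := Real.exp (-(2 * 4 ^ m)) * ((4 : ℝ) ^ m) ^ p

lemma heatWeight_nonneg (p : ℝ) (m : ℤ) : 0 ≤ heatWeight p m := by
  unfold heatWeight; positivity

lemma summable_heatWeight {p : ℝ} (hp : 0 < p) : Summable (heatWeight p) := by
  apply Summable.of_nat_of_neg
  · refine (Real.summable_exp_neg_nat.mul_left (p ^ p)).of_nonneg_of_le
      (fun m => heatWeight_nonneg p m) fun m => ?_
    have hx : (m : ℝ) ≤ 4 ^ m := by exact_mod_cast (Nat.lt_pow_self (by norm_num)).le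
    calc heatWeight p m ≤ Real.exp (-(2 * 4 ^ m)) * (p ^ p * Real.exp (4 ^ m)) := by
          simp only [heatWeight, zpow_natCast]
          gcongr
          exact Real.rpow_le_rpow_mul_exp (by positivity) hp
      _ = p ^ p * Real.exp (-4 ^ m) := by
          rw [mul_left_comm, ← Real.exp_add]; ring_nf
      _ ≤ p ^ p * Real.exp (-m) := by gcongr
  · refine (summable_geometric_of_lt_one (by positivity)
      (inv_lt_one_of_one_lt₀ (Real.one_lt_rpow (by norm_num : (1 : ℝ) < 4) hp))).of_nonneg_of_le
      (fun m => heatWeight_nonneg p _) fun m => ?_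
    calc heatWeight p (-m) ≤ ((4 : ℝ) ^ (-(m : ℤ))) ^ p :=
          mul_le_of_le_one_left (by positivity)
            (Real.exp_le_one_iff.2 (neg_nonpos.2 (by positivity)))
      _ = ((4 : ℝ) ^ p)⁻¹ ^ m := by
          rw [zpow_neg, zpow_natCast, Real.inv_rpow (by positivity), ← Real.rpow_natCast,
            ← Real.rpow_mul (by norm_num), mul_comm, Real.rpow_mul (by norm_num),
            Real.rpow_natCast, inv_pow]

lemma tsum_ofReal_heatWeight_ne_top {p : ℝ} (hp : 0 < p) :
    ∑' m, ENNReal.ofReal (heatWeight p m) ≠ ∞ := by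
  rw [← ENNReal.ofReal_tsum_of_nonneg (heatWeight_nonneg p) (summable_heatWeight hp)]
  exact ENNReal.ofReal_ne_top

lemma tendsto_tsum_heatWeight_compl_Icc {p : ℝ} (hp : 0 < p) :
    Tendsto (fun M : ℕ => ∑' m : {m // m ∉ Finset.Icc (-(M : ℤ)) M},
      ENNReal.ofReal (heatWeight p m)) atTop (𝓝 0) :=
  (ENNReal.tendsto_tsum_compl_atTop_zero (tsum_ofReal_heatWeight_ne_top hp)).comp
    Finset.tendsto_Icc_neg

lemma ofReal_exp_mul_rpow_eq (p : ℝ) (j k : ℤ) :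
    ENNReal.ofReal (Real.exp (-(2 * 4 ^ k) * 4 ^ j)) * ENNReal.ofReal (((4 : ℝ) ^ j) ^ p)
      = ENNReal.ofReal (((4 : ℝ) ^ k) ^ (-p)) * ENNReal.ofReal (heatWeight p (j + k)) := by
  rw [← ENNReal.ofReal_mul (by positivity), ← ENNReal.ofReal_mul (by positivity), heatWeight,
    zpow_add₀ (by norm_num), Real.mul_rpow (by positivity) (by positivity),
    Real.rpow_neg (by positivity)]
  have : ((4 : ℝ) ^ k) ^ p ≠ 0 := by positivity
  congr 1
  field_simp

lemma tsum_exp_mul_le_tsum_heatWeight {p : ℝ} (k : ℤ) {b β : ℤ → ℝ≥0∞}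
    (hb : ∀ j, b j ≤ ENNReal.ofReal (((4 : ℝ) ^ j) ^ p) * β (j + k)) :
    ∑' j, ENNReal.ofReal (Real.exp (-(2 * 4 ^ k) * 4 ^ j)) * b j
      ≤ ENNReal.ofReal (((4 : ℝ) ^ k) ^ (-p)) * ∑' m, ENNReal.ofReal (heatWeight p m) * β m := by
  rw [← (Equiv.addRight k).tsum_eq (fun m => ENNReal.ofReal (heatWeight p m) * β m),
    ← ENNReal.tsum_mul_left]
  refine ENNReal.tsum_le_tsum fun j => ?_
  calc ENNReal.ofReal (Real.exp (-(2 * 4 ^ k) * 4 ^ j)) * b j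
      ≤ ENNReal.ofReal (Real.exp (-(2 * 4 ^ k) * 4 ^ j))
          * (ENNReal.ofReal (((4 : ℝ) ^ j) ^ p) * β (j + k)) := by gcongr; exact hb j
    _ = _ := by rw [← mul_assoc, ofReal_exp_mul_rpow_eq, mul_assoc, Equiv.coe_addRight]

lemma tsum_heatWeight_mul_ite_le {p : ℝ} (M : ℕ) (a b : ℝ≥0∞) :
    ∑' m, ENNReal.ofReal (heatWeight p m) * (if m ∈ Finset.Icc (-(M : ℤ)) M then a else b)
      ≤ a * ∑' m, ENNReal.ofReal (heatWeight p m)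
        + b * ∑' m : {m // m ∉ Finset.Icc (-(M : ℤ)) M}, ENNReal.ofReal (heatWeight p m) := by
  have hsub : ∑' m : {m // m ∉ Finset.Icc (-(M : ℤ)) M}, ENNReal.ofReal (heatWeight p m)
      = ∑' m, {m | m ∉ Finset.Icc (-(M : ℤ)) M}.indicator (ENNReal.ofReal ∘ heatWeight p) m :=
    tsum_subtype {m : ℤ | m ∉ Finset.Icc (-(M : ℤ)) M} (ENNReal.ofReal ∘ heatWeight p)
  rw [hsub, ← ENNReal.tsum_mul_left, ← ENNReal.tsum_mul_left, ← ENNReal.tsum_add]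
  refine ENNReal.tsum_le_tsum fun m => ?_
  by_cases hm : m ∈ Finset.Icc (-(M : ℤ)) M
  · simp [hm, mul_comm]
  · rw [if_neg hm, Set.indicator_of_mem (show m ∈ {m | m ∉ Finset.Icc (-(M : ℤ)) M} from hm),
      Function.comp_apply, mul_comm]
    exact le_add_self

lemma exists_mem_Icc_of_tendsto_atBot {jk : ℕ → ℤ} {M : ℕ} (hjk : Tendsto jk atTop atBot)
    (hgap : ∀ l, |jk l - jk (l + 1)| ≤ M) {i : ℤ} (hi : i ≤ jk 0) :
    ∃ l, jk l ∈ Set.Icc (i - M) i := by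
  classical
  have hex : ∃ l, jk l ≤ i := (hjk.eventually (eventually_le_atBot i)).exists
  have hspec := Nat.find_spec hex
  refine ⟨Nat.find hex, ?_, hspec⟩
  rcases hfind : Nat.find hex with _ | l
  · rw [hfind] at hspec
    omega
  · have hmin : ¬ jk l ≤ i := Nat.find_min hex (by omega)
    have hstep := abs_le.1 (hgap l)
    rw [hfind] at hspec
    omega

lemma exists_seq_tendsto_atBot_of_forall_window {P : ℤ → Prop} {M : ℕ}
    (h : ∀ k : ℕ, ∃ j : ℤ, |j + k| ≤ M ∧ P j) :
    ∃ jk : ℕ → ℤ, Tendsto jk atTop atBot ∧ (∃ M' : ℕ, ∀ l, |jk l - jk (l + 1)| ≤ M') ∧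
      ∀ l, P (jk l) := by
  choose jk hjk hP using h
  refine ⟨jk, ?_, ⟨2 * M + 1, fun l => ?_⟩, hP⟩
  · refine tendsto_atBot_mono (fun l => ?_ : ∀ l : ℕ, jk l ≤ M + -(l : ℤ))
      (tendsto_atBot_add_const_left _ _ (tendsto_neg_atTop_atBot.comp tendsto_natCast_atTop_atTop))
    have := (abs_le.1 (hjk l)).2
    omega
  · have h1 := abs_le.1 (hjk l)
    have h2 := abs_le.1 (hjk (l + 1))
    rw [abs_le]
    push_cast at h1 h2 ⊢
    omega

namespace Antitone

variable {f : ℝ → ℝ≥0∞} {p : ℝ}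

lemma exists_le_ofReal_mul_one_add_rpow_neg (hf : Antitone f) (h0 : f 0 ≠ ∞) (hp : 0 ≤ p)
    {C : ℝ} (hC : 0 ≤ C)
    (h : ∀ k : ℤ, 0 ≤ k → f (4 ^ k) ≤ ENNReal.ofReal (C * ((4 : ℝ) ^ k) ^ (-p))) :
    ∃ c', 0 < c' ∧ ∀ t, 0 ≤ t → f t ≤ ENNReal.ofReal (c' * (1 + t) ^ (-p)) := by
  set F := (f 0).toReal
  have hF : 0 ≤ F := ENNReal.toReal_nonneg
  refine ⟨8 ^ p * (C + F + 1), by positivity, fun t ht => ?_⟩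
  have hq : 0 ≤ 8 ^ p * (1 + t) ^ (-p) := by positivity
  suffices f t ≤ ENNReal.ofReal ((C + F) * (8 ^ p * (1 + t) ^ (-p))) from
    this.trans (ENNReal.ofReal_le_ofReal (by nlinarith))
  rcases lt_or_ge t 1 with ht1 | ht1
  · have hq1 : 1 ≤ 8 ^ p * (1 + t) ^ (-p) := by
      rw [Real.rpow_neg (by positivity), ← div_eq_mul_inv, ← Real.div_rpow (by norm_num)
        (by positivity)]
      exact Real.one_le_rpow (by rw [le_div_iff₀ (by positivity)]; linarith) hp
    calc f t ≤ f 0 := hf ht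
      _ = ENNReal.ofReal F := (ENNReal.ofReal_toReal h0).symm
      _ ≤ _ := ENNReal.ofReal_le_ofReal (by nlinarith)
  · obtain ⟨k, hk1, hk2⟩ := exists_mem_Ico_zpow (by linarith : 0 < t) (by norm_num : (1 : ℝ) < 4)
    rw [zpow_add_one₀ (by norm_num)] at hk2
    have hk : 0 ≤ k := by
      by_contra! hneg
      have : (4 : ℝ) ^ k ≤ 4⁻¹ := by
        simpa using zpow_le_zpow_right₀ (by norm_num : (1 : ℝ) ≤ 4) (by omega : k ≤ -1)
      linarith
    have hrate : ((4 : ℝ) ^ k) ^ (-p) ≤ 8 ^ p * (1 + t) ^ (-p) :=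
      calc ((4 : ℝ) ^ k) ^ (-p) = 8 ^ p * (8 * 4 ^ k) ^ (-p) := by
            rw [Real.mul_rpow (by norm_num) (zpow_pos (by norm_num) k).le, ← mul_assoc,
              ← Real.rpow_add (by norm_num), add_neg_cancel, Real.rpow_zero, one_mul]
        _ ≤ 8 ^ p * (1 + t) ^ (-p) :=
            mul_le_mul_of_nonneg_left
              (Real.rpow_le_rpow_of_nonpos (by linarith) (by linarith) (by linarith))
              (by positivity)
    calc f t ≤ f (4 ^ k) := hf hk1
      _ ≤ ENNReal.ofReal (C * ((4 : ℝ) ^ k) ^ (-p)) := h k hk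
      _ ≤ _ := ENNReal.ofReal_le_ofReal (by nlinarith)

lemma exists_ofReal_mul_one_add_rpow_neg_le (hf : Antitone f) (hp : 0 ≤ p) {c : ℝ} (hc : 0 < c)
    (h : ∀ᶠ k : ℤ in atTop, ENNReal.ofReal (c * ((4 : ℝ) ^ k) ^ (-p)) ≤ f (4 ^ k)) :
    ∃ c', 0 < c' ∧ ∀ t, 0 ≤ t → ENNReal.ofReal (c' * (1 + t) ^ (-p)) ≤ f t := by
  obtain ⟨K, hK⟩ := eventually_atTop.1 (h.and (eventually_ge_atTop 0))
  have hK0 := (hK K le_rfl).2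
  refine ⟨c * ((4 : ℝ) ^ (K + 1)) ^ (-p), by positivity, fun t ht => ?_⟩
  obtain ⟨m, hm1, hm2⟩ := exists_mem_Ico_zpow (by linarith : 0 < 1 + t) (by norm_num : (1 : ℝ) < 4)
  have hm : 0 ≤ m + 1 := by
    by_contra! hneg
    have : (4 : ℝ) ^ (m + 1) ≤ 1 := zpow_le_one_of_nonpos₀ (by norm_num) (by omega)
    linarith
  have hk : (4 : ℝ) ^ (m + 1 + K) = 4 ^ (K + 1) * 4 ^ m := by
    rw [← zpow_add₀ (by norm_num)]; ring_nf
  have htk : t ≤ 4 ^ (m + 1 + K) := by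
    rw [zpow_add₀ (by norm_num)]
    nlinarith [one_le_zpow₀ (by norm_num : (1 : ℝ) ≤ 4) hK0]
  have hrate : ((4 : ℝ) ^ (K + 1)) ^ (-p) * (1 + t) ^ (-p) ≤ ((4 : ℝ) ^ (m + 1 + K)) ^ (-p) := by
    rw [← Real.mul_rpow (by positivity) (by positivity), hk]
    exact Real.rpow_le_rpow_of_nonpos (by positivity) (by gcongr) (by linarith)
  calc ENNReal.ofReal (c * ((4 : ℝ) ^ (K + 1)) ^ (-p) * (1 + t) ^ (-p))
      ≤ ENNReal.ofReal (c * ((4 : ℝ) ^ (m + 1 + K)) ^ (-p)) := by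
        rw [mul_assoc]; gcongr
    _ ≤ f (4 ^ (m + 1 + K)) := (hK _ (by omega)).1
    _ ≤ f t := hf htk

end Antitone

section Decay

variable {n : ℕ} {g : EuclideanSpace ℝ (Fin n) → ℂ} {p : ℝ}

lemma Ealpha_one_zpow_le_of_shellEnergy_le (hn : 1 ≤ n) (hp : 0 < p) {B : ℝ} (hB0 : 0 ≤ B)
    (hB : ∀ j, shellEnergy n g j ≤ ENNReal.ofReal (B * ((4 : ℝ) ^ j) ^ p)) :
    ∃ C, 0 ≤ C ∧ ∀ k : ℤ, Ealpha n g 1 (4 ^ k) ≤ ENNReal.ofReal (C * ((4 : ℝ) ^ k) ^ (-p)) := by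
  refine ⟨B * (∑' m, ENNReal.ofReal (heatWeight p m)).toReal, by positivity, fun k => ?_⟩
  have hb : ∀ j, shellEnergy n g j ≤ ENNReal.ofReal (((4 : ℝ) ^ j) ^ p) * ENNReal.ofReal B :=
    fun j => by rw [← ENNReal.ofReal_mul (by positivity), mul_comm]; exact hB j
  calc Ealpha n g 1 (4 ^ k)
      ≤ ENNReal.ofReal (((4 : ℝ) ^ k) ^ (-p))
          * ∑' m, ENNReal.ofReal (heatWeight p m) * ENNReal.ofReal B :=
        (Ealpha_one_le_tsum hn (by positivity)).trans (tsum_exp_mul_le_tsum_heatWeight k hb)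
    _ = ENNReal.ofReal (B * (∑' m, ENNReal.ofReal (heatWeight p m)).toReal
          * ((4 : ℝ) ^ k) ^ (-p)) := by
        rw [ENNReal.tsum_mul_right, ENNReal.ofReal_mul (by positivity), ENNReal.ofReal_mul hB0,
          ENNReal.ofReal_toReal (tsum_ofReal_heatWeight_ne_top hp)]
        ring

lemma eventually_ofReal_le_Ealpha_one_zpow (hp : 0 ≤ p) {c : ℝ} (hc : 0 ≤ c) {jk : ℕ → ℤ} {M : ℕ}
    (hjk : Tendsto jk atTop atBot) (hgap : ∀ l, |jk l - jk (l + 1)| ≤ M)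
    (hlow : ∀ l, ENNReal.ofReal (c * ((4 : ℝ) ^ jk l) ^ p) ≤ shellEnergy n g (jk l)) :
    ∀ᶠ k : ℤ in atTop, ENNReal.ofReal (Real.exp (-8) * c * ((4 : ℝ) ^ (-(M : ℤ))) ^ p
      * ((4 : ℝ) ^ k) ^ (-p)) ≤ Ealpha n g 1 (4 ^ k) := by
  filter_upwards [eventually_ge_atTop (-jk 0)] with k hk
  obtain ⟨l, hl1, hl2⟩ := exists_mem_Icc_of_tendsto_atBot hjk hgap (i := -k) (by omega)
  set j := jk l
  have hexp : Real.exp (-8) ≤ Real.exp (-(8 * 4 ^ k) * 4 ^ j) := by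
    have : (4 : ℝ) ^ k * 4 ^ j ≤ 1 := by
      rw [← zpow_add₀ (by norm_num)]; exact zpow_le_one_of_nonpos₀ (by norm_num) (by omega)
    exact Real.exp_le_exp.2 (by nlinarith)
  have hpow : ((4 : ℝ) ^ (-(M : ℤ))) ^ p * ((4 : ℝ) ^ k) ^ (-p) ≤ ((4 : ℝ) ^ j) ^ p := by
    rw [Real.rpow_neg (by positivity), ← Real.inv_rpow (by positivity),
      ← Real.mul_rpow (by positivity) (by positivity), ← zpow_neg, ← zpow_add₀ (by norm_num)]
    exact Real.rpow_le_rpow (by positivity)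
      (zpow_le_zpow_right₀ (by norm_num) (by omega)) hp
  calc ENNReal.ofReal (Real.exp (-8) * c * ((4 : ℝ) ^ (-(M : ℤ))) ^ p * ((4 : ℝ) ^ k) ^ (-p))
      ≤ ENNReal.ofReal (Real.exp (-(8 * 4 ^ k) * 4 ^ j))
          * ENNReal.ofReal (c * ((4 : ℝ) ^ j) ^ p) := by
        rw [← ENNReal.ofReal_mul (by positivity)]
        refine ENNReal.ofReal_le_ofReal ?_
        rw [mul_assoc (Real.exp (-8) * c), mul_assoc]
        exact mul_le_mul hexp (mul_le_mul_of_nonneg_left hpow hc) (by positivity) (by positivity)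
    _ ≤ ENNReal.ofReal (Real.exp (-(8 * 4 ^ k) * 4 ^ j)) * shellEnergy n g j := by
        gcongr; exact hlow l
    _ ≤ Ealpha n g 1 (4 ^ k) := ofReal_exp_mul_shellEnergy_le_Ealpha_one (by positivity) j

lemma shellEnergy_le_of_Ealpha_one_zpow_le {C : ℝ}
    (h : ∀ k : ℤ, Ealpha n g 1 (4 ^ k) ≤ ENNReal.ofReal (C * ((4 : ℝ) ^ k) ^ (-p))) (j : ℤ) :
    shellEnergy n g j ≤ ENNReal.ofReal (Real.exp 8 * C * ((4 : ℝ) ^ j) ^ p) := by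
  have h4 : (4 : ℝ) ^ (-j) * 4 ^ j = 1 := by rw [zpow_neg, inv_mul_cancel₀ (by positivity)]
  have key := (ofReal_exp_mul_shellEnergy_le_Ealpha_one (g := g) (by positivity) j).trans (h (-j))
  rw [neg_mul, mul_assoc, h4, zpow_neg, Real.inv_rpow (by positivity),
    Real.rpow_neg (by positivity), inv_inv] at key
  calc shellEnergy n g j
      = ENNReal.ofReal (Real.exp 8)
          * (ENNReal.ofReal (Real.exp (-(8 * 1))) * shellEnergy n g j) := by
        rw [← mul_assoc, ← ENNReal.ofReal_mul (by positivity), ← Real.exp_add]; norm_num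
    _ ≤ ENNReal.ofReal (Real.exp 8) * ENNReal.ofReal (C * ((4 : ℝ) ^ j) ^ p) := by gcongr
    _ = _ := by rw [← ENNReal.ofReal_mul (by positivity), mul_assoc]

lemma exists_window_ofReal_le_shellEnergy (hn : 1 ≤ n) (hp : 0 < p) {c B : ℝ} (hc : 0 < c)
    (hB : ∀ j, shellEnergy n g j ≤ ENNReal.ofReal (B * ((4 : ℝ) ^ j) ^ p))
    (hlow : ∀ k : ℕ, ENNReal.ofReal (c * ((4 : ℝ) ^ (k : ℤ)) ^ (-p)) ≤ Ealpha n g 1 (4 ^ (k : ℤ))) :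
    ∃ M : ℕ, ∃ ε > 0, ∀ k : ℕ, ∃ j : ℤ, |j + k| ≤ M ∧
      ENNReal.ofReal (ε * ((4 : ℝ) ^ j) ^ p) ≤ shellEnergy n g j := by
  set H := ∑' m, ENNReal.ofReal (heatWeight p m)
  set T := fun M : ℕ => ∑' m : {m // m ∉ Finset.Icc (-(M : ℤ)) M}, ENNReal.ofReal (heatWeight p m)
  -- With `ε = 1/(M+1)`: if every shell with `|j + k| ≤ M` had `b_j < ε 4^{pj}`, the rescaled heat
  -- sum would give `E(4^k) ≤ 4^{-pk} (ε H + B T M)`, and `ε H + B T M → 0` as `M → ∞`.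
  have hlim : Tendsto (fun M : ℕ => ENNReal.ofReal (1 / (M + 1)) * H + ENNReal.ofReal B * T M)
      atTop (𝓝 0) := by
    have h1 : Tendsto (fun M : ℕ => ENNReal.ofReal (1 / (M + 1))) atTop (𝓝 0) := by
      simpa using ENNReal.tendsto_ofReal tendsto_one_div_add_atTop_nhds_zero_nat
    simpa using (ENNReal.Tendsto.mul_const h1 (Or.inr (tsum_ofReal_heatWeight_ne_top hp))).add
      (ENNReal.Tendsto.const_mul (tendsto_tsum_heatWeight_compl_Icc hp)
        (Or.inr ENNReal.ofReal_ne_top))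
  obtain ⟨M, hM⟩ := (hlim.eventually (gt_mem_nhds (ENNReal.ofReal_pos.2 hc))).exists
  refine ⟨M, 1 / (M + 1), by positivity, fun k => ?_⟩
  by_contra! hbad
  have hb : ∀ j, shellEnergy n g j ≤ ENNReal.ofReal (((4 : ℝ) ^ j) ^ p) *
      (if j + k ∈ Finset.Icc (-(M : ℤ)) M then ENNReal.ofReal (1 / (M + 1))
        else ENNReal.ofReal B) := by
    intro j
    split_ifs with hj
    · rw [← ENNReal.ofReal_mul (by positivity), mul_comm]
      exact (hbad j (abs_le.2 (Finset.mem_Icc.1 hj))).le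
    · rw [← ENNReal.ofReal_mul (by positivity), mul_comm]
      exact hB j
  have hx : 0 < ((4 : ℝ) ^ (k : ℤ)) ^ (-p) := by positivity
  have key := (hlow k).trans <| (Ealpha_one_le_tsum hn (by positivity)).trans <|
    (tsum_exp_mul_le_tsum_heatWeight (k : ℤ) (β := fun m =>
      if m ∈ Finset.Icc (-(M : ℤ)) M then ENNReal.ofReal (1 / (M + 1)) else ENNReal.ofReal B)
      hb).trans (mul_le_mul_right (tsum_heatWeight_mul_ite_le M _ _) _)
  rw [mul_comm, ENNReal.ofReal_mul hx.le] at key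
  exact key.not_gt (ENNReal.mul_lt_mul_right (ENNReal.ofReal_pos.2 hx).ne'
    ENNReal.ofReal_ne_top hM)

end Decay

lemma Real.two_rpow_neg_mul_rpow_neg_le {x p : ℝ} (hx : 1 ≤ x) (hp : 0 ≤ p) :
    2 ^ (-p) * x ^ (-p) ≤ (1 + x) ^ (-p) := by
  rw [← Real.mul_rpow (by norm_num) (by linarith)]
  exact Real.rpow_le_rpow_of_nonpos (by linarith) (by linarith) (by linarith)

theorem stmt8 (n : ℕ) (hn : 1 ≤ n) (σ : ℝ) (hσ : 0 < σ)
    (g : EuclideanSpace ℝ (Fin n) → ℂ) (hg_meas : Measurable g) :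
    (MemLp g 2 (volume : Measure (EuclideanSpace ℝ (Fin n))) ∧ WeakACond n g (2 * σ)) ↔
    (∃ c c' : ℝ, 0 < c ∧ 0 < c' ∧ ∀ t : ℝ, 0 ≤ t →
      ENNReal.ofReal (c * (1 + t) ^ (-(2 * σ))) ≤ Ealpha n g 1 t ∧
      Ealpha n g 1 t ≤ ENNReal.ofReal (c' * (1 + t) ^ (-(2 * σ)))) := by
  have hp : 0 < 2 * σ := by positivity
  rw [weakACond_iff_shellEnergy, memLp_two_iff_Ealpha_one_zero_lt_top hg_meas.aestronglyMeasurable]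
  constructor
  · rintro ⟨hE0, c, C, hc, hC, jk, hjk, ⟨M, hgap⟩, hup, hlow⟩
    obtain ⟨C', hC', hE⟩ := Ealpha_one_zpow_le_of_shellEnergy_le hn hp hC.le hup
    obtain ⟨a, ha, hlower⟩ := antitone_Ealpha_one.exists_ofReal_mul_one_add_rpow_neg_le hp.le
      (by positivity) (eventually_ofReal_le_Ealpha_one_zpow hp.le hc.le hjk hgap hlow)
    obtain ⟨A, hA, hupper⟩ :=
      antitone_Ealpha_one.exists_le_ofReal_mul_one_add_rpow_neg hE0.ne hp.le hC' fun k _ => hE k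
    exact ⟨a, A, ha, hA, fun t ht => ⟨hlower t ht, hupper t ht⟩⟩
  · rintro ⟨c, c', hc, hc', h⟩
    have hup (k : ℤ) : Ealpha n g 1 (4 ^ k) ≤ ENNReal.ofReal (c' * ((4 : ℝ) ^ k) ^ (-(2 * σ))) :=
      (h _ (by positivity)).2.trans <| ENNReal.ofReal_le_ofReal <| mul_le_mul_of_nonneg_left
        (Real.rpow_le_rpow_of_nonpos (by positivity) (by linarith) (by linarith)) hc'.le
    have hlow (k : ℕ) : ENNReal.ofReal (c * 2 ^ (-(2 * σ)) * ((4 : ℝ) ^ (k : ℤ)) ^ (-(2 * σ)))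
        ≤ Ealpha n g 1 (4 ^ (k : ℤ)) :=
      (ENNReal.ofReal_le_ofReal (by
        rw [mul_assoc]
        exact mul_le_mul_of_nonneg_left (Real.two_rpow_neg_mul_rpow_neg_le
          (one_le_zpow₀ (by norm_num) (by positivity)) hp.le) hc.le)).trans (h _ (by positivity)).1
    have hB := shellEnergy_le_of_Ealpha_one_zpow_le hup
    obtain ⟨M, ε, hε, hwin⟩ := exists_window_ofReal_le_shellEnergy hn hp (by positivity) hB hlow
    obtain ⟨jk, hjk, hgap, hgood⟩ := exists_seq_tendsto_atBot_of_forall_window hwin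
    exact ⟨(h 0 le_rfl).2.trans_lt ENNReal.ofReal_lt_top, ε, _, hε, by positivity, jk, hjk, hgap,
      hB, hgood⟩
end
end

section
/- Let n ≥ 1, σ > 0, α > 0, and let g : ℝⁿ → ℂ be measurable. Then g satisfies the strong A-condition with exponent 2σ if and only if there exist constants c₁, c₂ > 0 such that for all t > 0: c₁ t^{−2σ/α} ≤ ∫_{ℝⁿ} e^{−2t|ξ|^{2α}} |g(ξ)|² dξ ≤ c₂ t^{−2σ/α} (the integral being a priori valued in [0,+∞]). This is the characterization of Ȧ^{−2σ}_{2,∞} by the two-sided bound c₁′ t^{−σ/α} ≤ ‖e^{t𝓛}f‖₂ ≤ c₂′ t^{−σ/α}, valid for all t > 0, for the semigroup generated by a diagonalizable pseudo-differential operator 𝓛 with homogeneous symbol of order 2α. -/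
open MeasureTheory Filter Topology
open scoped ENNReal NNReal

noncomputable section

/-!
On the dyadic annulus `A_j = {2^j ≤ |ξ| < 2^(j+1)}` the heat weight `e^{-2t|ξ|^a}` (`a = 2α`)
lies between its values at the two boundary spheres, so `E_α(t)` is squeezed between
`S(2^a t)` and `S(t)`, where `S(t) = ∑_j e^{-2t 2^{aj}} b_j` and `b_j = a_j(g)²`.
At the dyadic time `t = 2^{-ak}` the weight of block `j` is `e^{-2·2^{a(j-k)}}`: at least `e^{-2}`
for `j ≤ k`, and superexponentially small for `j ≫ k`. Thus `b_j ≲ 2^{sj}` (`s = 4σ`) turns `S` into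
a convolution with the summable profile `e^{-2·2^{ai}} 2^{si}` and gives `S ≲ 2^{sk}`, while a
large block in every window of length `M` gives `S ≳ 2^{sk}`. Conversely `S ≲ 2^{sk}` bounds each
block, and if a whole window of `2N` blocks were small, `S` at its centre would only see the tails
of the profile, which are small for large `N`. Monotonicity of `S` in `t` passes from dyadic times
to all times.
-/

open Real MeasureTheory Function

section DyadicAnnuli

variable {E : Type*} [NormedAddCommGroup E]

def dyadicAnnulus (j : ℤ) : Set E :=
  {ξ | (2 : ℝ) ^ (j : ℝ) ≤ ‖ξ‖ ∧ ‖ξ‖ < (2 : ℝ) ^ ((j : ℝ) + 1)}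

lemma mem_dyadicAnnulus_iff {ξ : E} {j : ℤ} :
    ξ ∈ dyadicAnnulus j ↔ ξ ≠ 0 ∧ ⌊logb 2 ‖ξ‖⌋ = j := by
  by_cases hξ : ξ = 0
  · subst hξ
    simp only [ne_eq, not_true_eq_false, false_and, iff_false]
    exact fun h => ((by positivity : (0 : ℝ) < 2 ^ (j : ℝ)).trans_le h.1).ne' norm_zero
  · have hpos : 0 < ‖ξ‖ := norm_pos_iff.2 hξ
    rw [Int.floor_eq_iff, le_logb_iff_rpow_le one_lt_two hpos,
      logb_lt_iff_lt_rpow one_lt_two hpos]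
    simp [dyadicAnnulus, hξ]

lemma pairwise_disjoint_dyadicAnnulus : Pairwise (Disjoint on (dyadicAnnulus : ℤ → Set E)) :=
  fun _ _ hij => Set.disjoint_left.2 fun _ hi hj =>
    hij ((mem_dyadicAnnulus_iff.1 hi).2.symm.trans (mem_dyadicAnnulus_iff.1 hj).2)

lemma iUnion_dyadicAnnulus : ⋃ j, (dyadicAnnulus j : Set E) = {0}ᶜ := by
  ext ξ
  simp [mem_dyadicAnnulus_iff]

lemma norm_rpow_mem_Icc_of_mem_dyadicAnnulus {a : ℝ} (ha : 0 ≤ a) {j : ℤ} {ξ : E}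
    (hξ : ξ ∈ dyadicAnnulus j) : ‖ξ‖ ^ a ∈ Set.Icc ((2 : ℝ) ^ (a * j)) (2 ^ a * 2 ^ (a * j)) := by
  constructor
  · rw [mul_comm, rpow_mul zero_le_two]
    exact rpow_le_rpow (by positivity) hξ.1 ha
  · calc ‖ξ‖ ^ a ≤ ((2 : ℝ) ^ ((j : ℝ) + 1)) ^ a := rpow_le_rpow (norm_nonneg _) hξ.2.le ha
      _ = 2 ^ a * 2 ^ (a * j) := by
        rw [← rpow_mul zero_le_two, ← rpow_add two_pos]
        ring_nf

variable [MeasurableSpace E] [OpensMeasurableSpace E]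

lemma measurableSet_dyadicAnnulus (j : ℤ) : MeasurableSet (dyadicAnnulus j : Set E) :=
  measurable_norm measurableSet_Ico

lemma lintegral_eq_tsum_dyadicAnnulus (μ : Measure E) [NullSingletonClass μ] (f : E → ℝ≥0∞) :
    ∫⁻ ξ, f ξ ∂μ = ∑' j : ℤ, ∫⁻ ξ in dyadicAnnulus j, f ξ ∂μ := by
  rw [← lintegral_iUnion measurableSet_dyadicAnnulus pairwise_disjoint_dyadicAnnulus,
    iUnion_dyadicAnnulus, restrict_compl_singleton]

end DyadicAnnuli

def ComparableToRpow (f : ℝ → ℝ≥0∞) (q : ℝ) : Prop :=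
  ∃ c₁ c₂ : ℝ, 0 < c₁ ∧ 0 < c₂ ∧ ∀ t : ℝ, 0 < t →
    ENNReal.ofReal (c₁ * t ^ q) ≤ f t ∧ f t ≤ ENNReal.ofReal (c₂ * t ^ q)

lemma comparableToRpow_iff_of_sandwich {f F : ℝ → ℝ≥0∞} {l q : ℝ} (hl : 0 < l)
    (hlow : ∀ t, 0 < t → f (l * t) ≤ F t) (hup : ∀ t, 0 < t → F t ≤ f t) :
    ComparableToRpow F q ↔ ComparableToRpow f q := by
  constructor
  · rintro ⟨c₁, c₂, hc₁, hc₂, h⟩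
    refine ⟨c₁, c₂ / l ^ q, hc₁, by positivity, fun t ht =>
      ⟨(h t ht).1.trans (hup t ht), ?_⟩⟩
    have htl : 0 < t / l := div_pos ht hl
    calc f t = f (l * (t / l)) := by rw [mul_div_cancel₀ t hl.ne']
      _ ≤ F (t / l) := hlow _ htl
      _ ≤ ENNReal.ofReal (c₂ * (t / l) ^ q) := (h _ htl).2
      _ = ENNReal.ofReal (c₂ / l ^ q * t ^ q) := by rw [div_rpow ht.le hl.le]; ring_nf
  · rintro ⟨c₁, c₂, hc₁, hc₂, h⟩
    refine ⟨c₁ * l ^ q, c₂, by positivity, hc₂, fun t ht =>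
      ⟨?_, (hup t ht).trans (h t ht).2⟩⟩
    calc ENNReal.ofReal (c₁ * l ^ q * t ^ q) = ENNReal.ofReal (c₁ * (l * t) ^ q) := by
          rw [mul_rpow hl.le ht.le, mul_assoc]
      _ ≤ f (l * t) := (h _ (mul_pos hl ht)).1
      _ ≤ F t := hlow t ht

def dyadicHeatSum (a : ℝ) (b : ℤ → ℝ≥0∞) (t : ℝ) : ℝ≥0∞ :=
  ∑' j : ℤ, ENNReal.ofReal (exp (-(2 * t) * 2 ^ (a * j))) * b j

lemma dyadicHeatSum_antitone (a : ℝ) (b : ℤ → ℝ≥0∞) : Antitone (dyadicHeatSum a b) := by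
  intro t t' htt'
  refine ENNReal.tsum_le_tsum fun j => ?_
  gcongr

section HeatEnergy

variable {E F : Type*} [NormedAddCommGroup E] [MeasurableSpace E] [OpensMeasurableSpace E]
  [Norm F] (μ : Measure E)

def heatEnergy (g : E → F) (a t : ℝ) : ℝ≥0∞ :=
  ∫⁻ ξ, ENNReal.ofReal (exp (-(2 * t) * ‖ξ‖ ^ a) * ‖g ξ‖ ^ 2) ∂μ

def blockEnergy (g : E → F) (j : ℤ) : ℝ≥0∞ :=
  ∫⁻ ξ in dyadicAnnulus j, ENNReal.ofReal (‖g ξ‖ ^ 2) ∂μ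

variable {μ} {a t : ℝ}

lemma setLIntegral_heat_le (ha : 0 ≤ a) (ht : 0 ≤ t) (g : E → F) (j : ℤ) :
    ∫⁻ ξ in dyadicAnnulus j, ENNReal.ofReal (exp (-(2 * t) * ‖ξ‖ ^ a) * ‖g ξ‖ ^ 2) ∂μ ≤
      ENNReal.ofReal (exp (-(2 * t) * 2 ^ (a * j))) * blockEnergy μ g j := by
  rw [blockEnergy, ← lintegral_const_mul' _ _ ENNReal.ofReal_ne_top]
  refine setLIntegral_mono' (measurableSet_dyadicAnnulus j) fun ξ hξ => ?_
  rw [← ENNReal.ofReal_mul (exp_pos _).le]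
  have hξa := (norm_rpow_mem_Icc_of_mem_dyadicAnnulus ha hξ).1
  simp only [neg_mul]
  gcongr

lemma le_setLIntegral_heat (ha : 0 ≤ a) (ht : 0 ≤ t) (g : E → F) (j : ℤ) :
    ENNReal.ofReal (exp (-(2 * (2 ^ a * t)) * 2 ^ (a * j))) * blockEnergy μ g j ≤
      ∫⁻ ξ in dyadicAnnulus j, ENNReal.ofReal (exp (-(2 * t) * ‖ξ‖ ^ a) * ‖g ξ‖ ^ 2) ∂μ := by
  rw [blockEnergy, ← lintegral_const_mul' _ _ ENNReal.ofReal_ne_top]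
  refine setLIntegral_mono' (measurableSet_dyadicAnnulus j) fun ξ hξ => ?_
  rw [← ENNReal.ofReal_mul (exp_pos _).le]
  have hξa := (norm_rpow_mem_Icc_of_mem_dyadicAnnulus ha hξ).2
  rw [show -(2 * (2 ^ a * t)) * 2 ^ (a * j) = -(2 * t * (2 ^ a * 2 ^ (a * j))) by ring, neg_mul]
  gcongr

variable [NullSingletonClass μ]

lemma dyadicHeatSum_le_heatEnergy (ha : 0 ≤ a) (ht : 0 ≤ t) (g : E → F) :
    dyadicHeatSum a (blockEnergy μ g) (2 ^ a * t) ≤ heatEnergy μ g a t := by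
  rw [heatEnergy, lintegral_eq_tsum_dyadicAnnulus]
  exact ENNReal.tsum_le_tsum fun j => le_setLIntegral_heat ha ht g j

lemma heatEnergy_le_dyadicHeatSum (ha : 0 ≤ a) (ht : 0 ≤ t) (g : E → F) :
    heatEnergy μ g a t ≤ dyadicHeatSum a (blockEnergy μ g) t := by
  rw [heatEnergy, lintegral_eq_tsum_dyadicAnnulus]
  exact ENNReal.tsum_le_tsum fun j => setLIntegral_heat_le ha ht g j

lemma comparableToRpow_heatEnergy_iff (ha : 0 ≤ a) (g : E → F) (q : ℝ) :
    ComparableToRpow (heatEnergy μ g a) q ↔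
      ComparableToRpow (dyadicHeatSum a (blockEnergy μ g)) q :=
  comparableToRpow_iff_of_sandwich (by positivity)
    (fun _ ht => dyadicHeatSum_le_heatEnergy ha ht.le g)
    (fun _ ht => heatEnergy_le_dyadicHeatSum ha ht.le g)

end HeatEnergy

lemma exp_neg_le_factorial_div_pow {x : ℝ} (hx : 0 < x) (m : ℕ) :
    exp (-x) ≤ m.factorial / x ^ m := by
  rw [exp_neg, ← one_div, div_le_div_iff₀ (exp_pos x) (by positivity), one_mul]
  have := pow_div_factorial_le_exp x hx.le m
  rwa [div_le_iff₀ (by positivity), mul_comm] at this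

lemma exists_tsum_indicator_compl_Ico_le {f : ℤ → ℝ≥0∞} (hf : ∑' i, f i ≠ ⊤) {ε : ℝ≥0∞}
    (hε : 0 < ε) : ∃ N : ℕ, 0 < N ∧ ∑' i, (Set.Ico (-N : ℤ) N)ᶜ.indicator f i ≤ ε := by
  obtain ⟨s, hs⟩ := Filter.eventually_atTop.1
    ((ENNReal.tendsto_tsum_compl_atTop_zero hf).eventually (gt_mem_nhds hε))
  refine ⟨s.sup Int.natAbs + 1, by omega, ?_⟩
  have hsub : (s : Set ℤ) ⊆ Set.Ico (-(s.sup Int.natAbs + 1 : ℕ) : ℤ) (s.sup Int.natAbs + 1 : ℕ) :=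
    fun i hi => by
      have := Finset.le_sup (f := Int.natAbs) hi
      simp only [Set.mem_Ico]
      omega
  calc ∑' i, (Set.Ico _ _)ᶜ.indicator f i ≤ ∑' i, (s : Set ℤ)ᶜ.indicator f i :=
        ENNReal.tsum_le_tsum fun i =>
          Set.indicator_le_indicator_of_subset (Set.compl_subset_compl.2 hsub) (fun _ => by simp) i
    _ = ∑' i : {x // x ∉ s}, f i := (tsum_subtype _ f).symm
    _ ≤ ε := (hs s le_rfl).le

lemma tsum_ite_mul_le {α : Type*} (W : Set α) [DecidablePred (· ∈ W)] (x y : ℝ≥0∞)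
    (φ : α → ℝ≥0∞) :
    ∑' i, (if i ∈ W then x else y) * φ i ≤ x * ∑' i, φ i + y * ∑' i, Wᶜ.indicator φ i := by
  rw [← ENNReal.tsum_mul_left, ← ENNReal.tsum_mul_left, ← ENNReal.tsum_add]
  refine ENNReal.tsum_le_tsum fun i => ?_
  by_cases hi : i ∈ W <;> simp [hi]

def dyadicHeatProfile (a s x : ℝ) : ℝ := exp (-(2 * 2 ^ (a * x))) * 2 ^ (s * x)

lemma dyadicHeatProfile_pos (a s x : ℝ) : 0 < dyadicHeatProfile a s x := by
  unfold dyadicHeatProfile; positivity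

lemma summable_dyadicHeatProfile {a s : ℝ} (ha : 0 < a) (hs : 0 < s) :
    Summable fun i : ℤ => dyadicHeatProfile a s i := by
  have hnonneg (x : ℝ) := (dyadicHeatProfile_pos a s x).le
  rw [summable_int_iff_summable_nat_and_neg]
  constructor
  · obtain ⟨m, hm⟩ := exists_nat_gt (s / a)
    have hq : (2 : ℝ) ^ (s - a * m) < 1 :=
      rpow_lt_one_of_one_lt_of_neg one_lt_two (by linarith [(div_lt_iff₀ ha).1 hm])
    refine .of_nonneg_of_le (fun n => hnonneg _) (fun n => ?_)
      ((summable_geometric_of_lt_one (by positivity) hq).mul_left (m.factorial : ℝ))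
    have hexp : exp (-(2 * 2 ^ (a * n))) ≤ m.factorial / (2 : ℝ) ^ (a * n * m) := by
      rw [rpow_mul_natCast zero_le_two (a * n) m]
      refine le_trans (exp_le_exp.2 ?_) (exp_neg_le_factorial_div_pow (by positivity) m)
      linarith [rpow_pos_of_pos two_pos (a * n)]
    calc dyadicHeatProfile a s ((n : ℤ) : ℝ)
        ≤ m.factorial / (2 : ℝ) ^ (a * n * m) * 2 ^ (s * n) := by
          rw [dyadicHeatProfile, Int.cast_natCast]; gcongr
      _ = m.factorial * ((2 : ℝ) ^ (s - a * m)) ^ n := by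
          rw [← rpow_mul_natCast zero_le_two, sub_mul, rpow_sub two_pos, mul_right_comm a]
          ring
  · have hq : (2 : ℝ) ^ (-s) < 1 := rpow_lt_one_of_one_lt_of_neg one_lt_two (neg_lt_zero.2 hs)
    refine .of_nonneg_of_le (fun n => hnonneg _) (fun n => ?_)
      (summable_geometric_of_lt_one (by positivity) hq)
    calc dyadicHeatProfile a s ((-(n : ℤ) : ℤ) : ℝ) ≤ 1 * 2 ^ (s * -(n : ℝ)) := by
          rw [dyadicHeatProfile]
          push_cast
          gcongr
          exact exp_le_one_iff.2 (by simp only [neg_nonpos]; positivity)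
      _ = ((2 : ℝ) ^ (-s)) ^ n := by rw [one_mul, ← rpow_mul_natCast zero_le_two]; ring_nf

lemma two_rpow_neg_mul_mul_two_rpow (a x y : ℝ) :
    (2 : ℝ) ^ (-(a * y)) * 2 ^ (a * (x + y)) = 2 ^ (a * x) := by
  rw [← rpow_add two_pos]; ring_nf

lemma eq_two_rpow_mul_dyadicHeatProfile (a s x y : ℝ) :
    exp (-(2 * 2 ^ (-(a * y))) * 2 ^ (a * (x + y))) * 2 ^ (s * (x + y)) =
      2 ^ (s * y) * dyadicHeatProfile a s x := by
  rw [dyadicHeatProfile, neg_mul, mul_assoc, two_rpow_neg_mul_mul_two_rpow,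
    mul_add, rpow_add two_pos]
  ring

lemma tsum_ofReal_dyadicHeatProfile {a s : ℝ} (ha : 0 < a) (hs : 0 < s) :
    ∑' i : ℤ, ENNReal.ofReal (dyadicHeatProfile a s i) =
      ENNReal.ofReal (∑' i : ℤ, dyadicHeatProfile a s i) :=
  (ENNReal.ofReal_tsum_of_nonneg (fun _ => (dyadicHeatProfile_pos a s _).le)
    (summable_dyadicHeatProfile ha hs)).symm

def DyadicComparable (f : ℝ → ℝ≥0∞) (a s : ℝ) : Prop :=
  ∃ c₁ c₂ : ℝ, 0 < c₁ ∧ 0 < c₂ ∧ ∀ k : ℤ,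
    ENNReal.ofReal (c₁ * 2 ^ (s * k)) ≤ f (2 ^ (-(a * k))) ∧
      f (2 ^ (-(a * k))) ≤ ENNReal.ofReal (c₂ * 2 ^ (s * k))

lemma two_rpow_neg_mul_rpow {a : ℝ} (ha : a ≠ 0) (s y : ℝ) :
    ((2 : ℝ) ^ (-(a * y))) ^ (-(s / a)) = 2 ^ (s * y) := by
  rw [← rpow_mul zero_le_two]
  congr 1
  field_simp

lemma comparableToRpow_iff_dyadicComparable {f : ℝ → ℝ≥0∞} (hf : Antitone f) {a s : ℝ}
    (ha : 0 < a) (hs : 0 ≤ s) :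
    ComparableToRpow f (-(s / a)) ↔ DyadicComparable f a s := by
  constructor
  · rintro ⟨c₁, c₂, hc₁, hc₂, h⟩
    refine ⟨c₁, c₂, hc₁, hc₂, fun k => ?_⟩
    simpa only [two_rpow_neg_mul_rpow ha.ne'] using h (2 ^ (-(a * k))) (by positivity)
  · rintro ⟨c₁, c₂, hc₁, hc₂, h⟩
    refine ⟨c₁ * 2 ^ (-s), c₂ * 2 ^ s, by positivity, by positivity, fun t ht => ?_⟩
    set y := -(logb 2 t / a)
    have ht_eq : t = 2 ^ (-(a * y)) := by
      rw [show -(a * y) = logb 2 t by simp only [y]; field_simp, rpow_logb two_pos (by norm_num) ht]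
    obtain ⟨hk, hk'⟩ : (⌊y⌋ : ℝ) ≤ y ∧ y < ⌊y⌋ + 1 := ⟨Int.floor_le y, Int.lt_floor_add_one y⟩
    rw [ht_eq, two_rpow_neg_mul_rpow ha.ne']
    constructor
    · calc ENNReal.ofReal (c₁ * 2 ^ (-s) * 2 ^ (s * y)) ≤ ENNReal.ofReal (c₁ * 2 ^ (s * ⌊y⌋)) := by
            rw [mul_assoc, ← rpow_add two_pos]
            gcongr
            · exact one_le_two
            · nlinarith
        _ ≤ f (2 ^ (-(a * ⌊y⌋))) := (h ⌊y⌋).1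
        _ ≤ f (2 ^ (-(a * y))) := hf (rpow_le_rpow_of_exponent_le one_le_two (by nlinarith))
    · calc f (2 ^ (-(a * y))) ≤ f (2 ^ (-(a * ((⌊y⌋ + 1 : ℤ) : ℝ)))) :=
            hf (rpow_le_rpow_of_exponent_le one_le_two (by push_cast; nlinarith))
        _ ≤ ENNReal.ofReal (c₂ * 2 ^ (s * ((⌊y⌋ + 1 : ℤ) : ℝ))) := (h _).2
        _ ≤ ENNReal.ofReal (c₂ * 2 ^ s * 2 ^ (s * y)) := by
            rw [mul_assoc, ← rpow_add two_pos]
            gcongr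
            · exact one_le_two
            · push_cast; nlinarith

lemma exp_neg_two_mul_le_dyadicHeatSum {a : ℝ} (ha : 0 ≤ a) (b : ℤ → ℝ≥0∞) {j k : ℤ}
    (hjk : j ≤ k) : ENNReal.ofReal (exp (-2)) * b j ≤ dyadicHeatSum a b (2 ^ (-(a * k))) := by
  refine le_trans ?_ (ENNReal.le_tsum j)
  have hw := two_rpow_neg_mul_mul_two_rpow a (j - k) k
  rw [sub_add_cancel] at hw
  have hle : (2 : ℝ) ^ (a * (j - k)) ≤ 1 :=
    rpow_le_one_of_one_le_of_nonpos one_le_two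
      (mul_nonpos_of_nonneg_of_nonpos ha (by simpa using hjk))
  gcongr
  nlinarith

lemma dyadicHeatSum_two_rpow_le {a s : ℝ} {b : ℤ → ℝ≥0∞} (β : ℤ → ℝ≥0∞) (k : ℤ)
    (hb : ∀ i : ℤ, b (i + k) ≤ β i * ENNReal.ofReal (2 ^ (s * ((i : ℝ) + k)))) :
    dyadicHeatSum a b (2 ^ (-(a * k))) ≤
      ENNReal.ofReal (2 ^ (s * k)) * ∑' i : ℤ, β i * ENNReal.ofReal (dyadicHeatProfile a s i) := by
  rw [dyadicHeatSum, ← (Equiv.addRight k).tsum_eq, ← ENNReal.tsum_mul_left]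
  refine ENNReal.tsum_le_tsum fun i => ?_
  simp only [Equiv.coe_addRight, Int.cast_add]
  calc ENNReal.ofReal (exp (-(2 * 2 ^ (-(a * k))) * 2 ^ (a * (i + k)))) * b (i + k)
      ≤ ENNReal.ofReal (exp (-(2 * 2 ^ (-(a * k))) * 2 ^ (a * (i + k)))) *
          (β i * ENNReal.ofReal (2 ^ (s * ((i : ℝ) + k)))) := by gcongr; exact hb i
    _ = ENNReal.ofReal (2 ^ (s * k)) * (β i * ENNReal.ofReal (dyadicHeatProfile a s i)) := by
      rw [mul_left_comm, ← ENNReal.ofReal_mul (exp_pos _).le, eq_two_rpow_mul_dyadicHeatProfile,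
        ENNReal.ofReal_mul (by positivity), mul_left_comm]

def StrongACondSeq (b : ℤ → ℝ≥0∞) (σ : ℝ) : Prop :=
  ∃ c C : ℝ, 0 < c ∧ 0 < C ∧ ∃ M : ℕ, 0 < M ∧
    (∀ j : ℤ, b j ≤ ENNReal.ofReal (C * (2 : ℝ) ^ (σ * (j : ℝ)))) ∧
    (∀ j₀ : ℤ, ∃ j : ℤ, j₀ ≤ j ∧ j < j₀ + M ∧
      ENNReal.ofReal (c * (2 : ℝ) ^ (σ * (j : ℝ))) ≤ b j)

lemma StrongACondSeq.rpow {b : ℤ → ℝ≥0∞} {σ : ℝ} (h : StrongACondSeq b σ) {q : ℝ}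
    (hq : 0 ≤ q) :
    StrongACondSeq (fun j => b j ^ q) (q * σ) := by
  obtain ⟨c, C, hc, hC, M, hM, hup, hwin⟩ := h
  have key {x : ℝ} (hx : 0 ≤ x) (j : ℤ) :
      ENNReal.ofReal (x * 2 ^ (σ * j)) ^ q = ENNReal.ofReal (x ^ q * 2 ^ (q * σ * j)) := by
    rw [ENNReal.ofReal_rpow_of_nonneg (by positivity) hq, mul_rpow hx (by positivity),
      ← rpow_mul zero_le_two]
    ring_nf
  refine ⟨c ^ q, C ^ q, by positivity, by positivity, M, hM, fun j => ?_, fun j₀ => ?_⟩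
  · rw [← key hC.le]
    exact ENNReal.rpow_le_rpow (hup j) hq
  · obtain ⟨j, hj₀, hjM, hj⟩ := hwin j₀
    refine ⟨j, hj₀, hjM, ?_⟩
    rw [← key hc.le]
    exact ENNReal.rpow_le_rpow hj hq

lemma StrongACondSeq.dyadicComparable {a s : ℝ} {b : ℤ → ℝ≥0∞} (h : StrongACondSeq b s)
    (ha : 0 < a) (hs : 0 < s) : DyadicComparable (dyadicHeatSum a b) a s := by
  obtain ⟨c, C, hc, hC, M, -, hup, hwin⟩ := h
  set κ := ∑' i : ℤ, dyadicHeatProfile a s i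
  have hκ : 0 < κ := (summable_dyadicHeatProfile ha hs).tsum_pos
    (fun _ => (dyadicHeatProfile_pos a s _).le) 0 (dyadicHeatProfile_pos a s _)
  refine ⟨exp (-2) * c * 2 ^ (-(s * M)), C * κ, by positivity, by positivity, fun k => ⟨?_, ?_⟩⟩
  · obtain ⟨j, hj₀, hjM, hj⟩ := hwin (k - M)
    have hkj : s * k + -(s * M) ≤ s * j := by
      have : (k : ℝ) - M ≤ j := by exact_mod_cast hj₀
      nlinarith
    calc ENNReal.ofReal (exp (-2) * c * 2 ^ (-(s * M)) * 2 ^ (s * k))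
        ≤ ENNReal.ofReal (exp (-2)) * ENNReal.ofReal (c * 2 ^ (s * j)) := by
          rw [← ENNReal.ofReal_mul (exp_pos _).le, mul_assoc, mul_assoc,
            ← rpow_add two_pos, add_comm]
          gcongr
          exact one_le_two
      _ ≤ ENNReal.ofReal (exp (-2)) * b j := by gcongr
      _ ≤ dyadicHeatSum a b (2 ^ (-(a * k))) :=
          exp_neg_two_mul_le_dyadicHeatSum ha.le b (by omega)
  · refine (dyadicHeatSum_two_rpow_le (s := s) (fun _ => ENNReal.ofReal C) k fun i => ?_).trans_eq
      ?_
    · rw [← ENNReal.ofReal_mul hC.le]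
      exact_mod_cast hup (i + k)
    · rw [ENNReal.tsum_mul_left, tsum_ofReal_dyadicHeatProfile ha hs,
        ← ENNReal.ofReal_mul hC.le, ← ENNReal.ofReal_mul (by positivity)]
      congr 1
      ring

lemma le_of_dyadicHeatSum_le {a s c : ℝ} (ha : 0 ≤ a) {b : ℤ → ℝ≥0∞}
    (h : ∀ k : ℤ, dyadicHeatSum a b (2 ^ (-(a * k))) ≤ ENNReal.ofReal (c * 2 ^ (s * k)))
    (j : ℤ) : b j ≤ ENNReal.ofReal (exp 2 * c * 2 ^ (s * j)) := by
  calc b j = ENNReal.ofReal (exp 2) * (ENNReal.ofReal (exp (-2)) * b j) := by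
        rw [← mul_assoc, ← ENNReal.ofReal_mul (exp_pos _).le, ← exp_add]
        simp
    _ ≤ ENNReal.ofReal (exp 2) * ENNReal.ofReal (c * 2 ^ (s * j)) := by
        gcongr
        exact (exp_neg_two_mul_le_dyadicHeatSum ha b le_rfl).trans (h j)
    _ = ENNReal.ofReal (exp 2 * c * 2 ^ (s * j)) := by
        rw [← ENNReal.ofReal_mul (exp_pos _).le, mul_assoc]

lemma exists_window_of_le_dyadicHeatSum {a s c D : ℝ} (ha : 0 < a) (hs : 0 < s) (hc : 0 < c)
    (hD : 0 < D) {b : ℤ → ℝ≥0∞} (hup : ∀ j : ℤ, b j ≤ ENNReal.ofReal (D * 2 ^ (s * j)))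
    (hlow : ∀ k : ℤ, ENNReal.ofReal (c * 2 ^ (s * k)) ≤ dyadicHeatSum a b (2 ^ (-(a * k)))) :
    ∃ c' : ℝ, 0 < c' ∧ ∃ M : ℕ, 0 < M ∧ ∀ j₀ : ℤ, ∃ j : ℤ, j₀ ≤ j ∧ j < j₀ + M ∧
      ENNReal.ofReal (c' * 2 ^ (s * j)) ≤ b j := by
  set φ : ℤ → ℝ≥0∞ := fun i => ENNReal.ofReal (dyadicHeatProfile a s i)
  set κ := ∑' i : ℤ, dyadicHeatProfile a s i
  have hκ : 0 < κ := (summable_dyadicHeatProfile ha hs).tsum_pos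
    (fun _ => (dyadicHeatProfile_pos a s _).le) 0 (dyadicHeatProfile_pos a s _)
  have hφ : ∑' i, φ i = ENNReal.ofReal κ := tsum_ofReal_dyadicHeatProfile ha hs
  obtain ⟨N, hN, htail⟩ := exists_tsum_indicator_compl_Ico_le (f := φ)
    (by rw [hφ]; exact ENNReal.ofReal_ne_top)
    (ENNReal.ofReal_pos.2 (by positivity : 0 < c / (4 * D)))
  refine ⟨c / (4 * κ), by positivity, 2 * N, by omega, fun j₀ => ?_⟩
  by_contra! hsmall
  -- at the centre `k` of the window, the window and the blocks outside it each contribute at most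
  -- `c/4 · 2^{sk}` to the heat sum, contradicting `hlow k`
  set k : ℤ := j₀ + N
  set W := Set.Ico (-N : ℤ) N
  set β : ℤ → ℝ≥0∞ := fun i => if i ∈ W then ENNReal.ofReal (c / (4 * κ)) else ENNReal.ofReal D
  have hb (i : ℤ) : b (i + k) ≤ β i * ENNReal.ofReal (2 ^ (s * ((i : ℝ) + k))) := by
    rw [show (i : ℝ) + k = ((i + k : ℤ) : ℝ) by push_cast; ring]
    by_cases hi : i ∈ W
    · obtain ⟨hi₁, hi₂⟩ := Set.mem_Ico.1 hi
      simp only [β, if_pos hi]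
      rw [← ENNReal.ofReal_mul (by positivity)]
      exact (hsmall _ (by omega) (by omega)).le
    · simp only [β, if_neg hi]
      rw [← ENNReal.ofReal_mul hD.le]
      exact hup _
  have hsum : ∑' i, β i * φ i ≤ ENNReal.ofReal (c / 2) := by
    calc ∑' i, β i * φ i
        ≤ ENNReal.ofReal (c / (4 * κ)) * ∑' i, φ i + ENNReal.ofReal D * ∑' i, Wᶜ.indicator φ i :=
          tsum_ite_mul_le W _ _ φ
      _ ≤ ENNReal.ofReal (c / (4 * κ)) * ENNReal.ofReal κ +
            ENNReal.ofReal D * ENNReal.ofReal (c / (4 * D)) := by rw [hφ]; gcongr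
      _ = ENNReal.ofReal (c / 2) := by
          rw [← ENNReal.ofReal_mul (by positivity), ← ENNReal.ofReal_mul hD.le,
            ← ENNReal.ofReal_add (by positivity) (by positivity)]
          congr 1
          field_simp
          ring
  have := (hlow k).trans ((dyadicHeatSum_two_rpow_le β k hb).trans (mul_le_mul_right hsum _))
  rw [← ENNReal.ofReal_mul (by positivity), ENNReal.ofReal_le_ofReal_iff (by positivity)] at this
  nlinarith [rpow_pos_of_pos two_pos (s * k)]

lemma DyadicComparable.strongACondSeq {a s : ℝ} {b : ℤ → ℝ≥0∞}
    (h : DyadicComparable (dyadicHeatSum a b) a s) (ha : 0 < a) (hs : 0 < s) :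
    StrongACondSeq b s := by
  obtain ⟨c₁, c₂, hc₁, hc₂, h⟩ := h
  have hup := le_of_dyadicHeatSum_le ha.le fun k => (h k).2
  obtain ⟨c, hc, M, hM, hwin⟩ :=
    exists_window_of_le_dyadicHeatSum ha hs hc₁ (by positivity) hup fun k => (h k).1
  exact ⟨c, exp 2 * c₂, hc, by positivity, M, hM, hup, hwin⟩

theorem comparableToRpow_dyadicHeatSum_iff {a s : ℝ} (ha : 0 < a) (hs : 0 < s)
    (b : ℤ → ℝ≥0∞) : ComparableToRpow (dyadicHeatSum a b) (-(s / a)) ↔ StrongACondSeq b s :=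
  (comparableToRpow_iff_dyadicComparable (dyadicHeatSum_antitone a b) ha hs.le).trans
    ⟨fun h => h.strongACondSeq ha hs, fun h => h.dyadicComparable ha hs⟩

lemma strongACond_iff_blockEnergy (n : ℕ) (g : EuclideanSpace ℝ (Fin n) → ℂ) (σ : ℝ) :
    StrongACond n g σ ↔ StrongACondSeq (blockEnergy volume g) (2 * σ) := by
  have hsq (j : ℤ) : (blockEnergy volume g j ^ (1 / 2 : ℝ)) ^ (2 : ℝ) = blockEnergy volume g j := by
    rw [← ENNReal.rpow_mul]; norm_num
  constructor
  · intro h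
    simpa only [hsq] using
      StrongACondSeq.rpow (b := fun j => blockEnergy volume g j ^ (1 / 2 : ℝ)) h zero_le_two
  · intro h
    have := h.rpow one_half_pos.le
    rwa [show (1 / 2 : ℝ) * (2 * σ) = σ by ring] at this

theorem stmt9_general (n : ℕ) (hn : 1 ≤ n) (σ α : ℝ) (hσ : 0 < σ) (hα : 0 < α)
    (g : EuclideanSpace ℝ (Fin n) → ℂ) :
    StrongACond n g (2 * σ) ↔
    (∃ c₁ c₂ : ℝ, 0 < c₁ ∧ 0 < c₂ ∧ ∀ t : ℝ, 0 < t →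
      ENNReal.ofReal (c₁ * t ^ (-(2 * σ) / α)) ≤ Ealpha n g α t ∧
      Ealpha n g α t ≤ ENNReal.ofReal (c₂ * t ^ (-(2 * σ) / α))) := by
  -- makes `volume` atomless
  have : Nonempty (Fin n) := ⟨⟨0, hn⟩⟩
  have hq : -(2 * σ) / α = -(2 * (2 * σ) / (2 * α)) := by field_simp
  calc StrongACond n g (2 * σ) ↔ StrongACondSeq (blockEnergy volume g) (2 * (2 * σ)) :=
        strongACond_iff_blockEnergy n g _
    _ ↔ ComparableToRpow (dyadicHeatSum (2 * α) (blockEnergy volume g))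
          (-(2 * (2 * σ) / (2 * α))) :=
        (comparableToRpow_dyadicHeatSum_iff (by positivity) (by positivity) _).symm
    _ ↔ ComparableToRpow (heatEnergy volume g (2 * α)) (-(2 * σ) / α) := by
        rw [hq, comparableToRpow_heatEnergy_iff (by positivity)]

theorem stmt9 (n : ℕ) (hn : 1 ≤ n) (σ α : ℝ) (hσ : 0 < σ) (hα : 0 < α)
    (g : EuclideanSpace ℝ (Fin n) → ℂ) (hg_meas : Measurable g) :
    StrongACond n g (2 * σ) ↔
    (∃ c₁ c₂ : ℝ, 0 < c₁ ∧ 0 < c₂ ∧ ∀ t : ℝ, 0 < t →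
      ENNReal.ofReal (c₁ * t ^ (-(2 * σ) / α)) ≤ Ealpha n g α t ∧
      Ealpha n g α t ≤ ENNReal.ofReal (c₂ * t ^ (-(2 * σ) / α))) :=
  stmt9_general n hn σ α hσ hα g
end
end
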